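/- arXiv:1901.01997 — 5 statements merged into one kernel-verified Lean document; each statement's English description precedes it below -/
import Mathlib

section
/- For tensors A ∈ ℂ^{n1×n2×n3} and B ∈ ℂ^{n2×n1×n3}, the trace of the tensor product satisfies tr(A * B) = tr( (Σ_{i=1}^{n3} A^{(i)}) (Σ_{i=1}^{n3} B^{(i)}) ). -/
open Finset Matrix

/-- Block circulant matrix of a tensor given by its frontal slices:
the (p,q) block is the slice with index (p - q) mod n3. -/
noncomputable def bcirc {n1 n2 n3 : ℕ} [NeZero n3]
    (A : Fin n3 → Matrix (Fin n1) (Fin n2) ℂ) :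
    Matrix (Fin n3 × Fin n1) (Fin n3 × Fin n2) ℂ :=
  fun p q => A (p.1 - q.1) p.2 q.2

/-- Unfold operator: stacks the frontal slices of a tensor vertically. -/
def unfold {n2 n3 n4 : ℕ} (B : Fin n3 → Matrix (Fin n2) (Fin n4) ℂ) :
    Matrix (Fin n3 × Fin n2) (Fin n4) ℂ :=
  fun p j => B p.1 p.2 j

/-- t-product A * B = fold(bcirc(A) · unfold(B)), given by its frontal slices. -/
noncomputable def tProd {n1 n2 n3 n4 : ℕ} [NeZero n3]
    (A : Fin n3 → Matrix (Fin n1) (Fin n2) ℂ)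
    (B : Fin n3 → Matrix (Fin n2) (Fin n4) ℂ) :
    Fin n3 → Matrix (Fin n1) (Fin n4) ℂ :=
  fun t => fun i j => (bcirc A * unfold B) (t, i) j

/-! Each frontal slice of `A * B` is the cyclic convolution `∑ s, A (t - s) * B s`. Summing a
convolution over all `t` gives the product of the sums (the zeroth Fourier coefficient of
`A * B`), and the trace is additive. -/

theorem tProd_apply {n1 n2 n3 n4 : ℕ} [NeZero n3]
    (A : Fin n3 → Matrix (Fin n1) (Fin n2) ℂ) (B : Fin n3 → Matrix (Fin n2) (Fin n4) ℂ)
    (t : Fin n3) :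
    tProd A B t = ∑ s, A (t - s) * B s := by
  ext i j
  simp only [tProd, bcirc, unfold, mul_apply, Fintype.sum_prod_type, Matrix.sum_apply]

theorem Fintype.sum_sum_sub_left {G M : Type*} [AddGroup G] [Fintype G] [AddCommMonoid M]
    (f : G → G → M) :
    ∑ t, ∑ s, f (t - s) s = ∑ a, ∑ s, f a s := by
  rw [Finset.sum_comm, Finset.sum_comm (f := f)]
  exact Finset.sum_congr rfl fun s _ => Fintype.sum_equiv (Equiv.subRight s) _ _ fun _ => rfl

theorem sum_tProd {n1 n2 n3 n4 : ℕ} [NeZero n3]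
    (A : Fin n3 → Matrix (Fin n1) (Fin n2) ℂ) (B : Fin n3 → Matrix (Fin n2) (Fin n4) ℂ) :
    ∑ t, tProd A B t = (∑ i, A i) * (∑ i, B i) := by
  simp only [tProd_apply, Fintype.sum_sum_sub_left (fun a s => A a * B s), Matrix.sum_mul,
    Matrix.mul_sum]
  exact Finset.sum_comm

/-- trace of the t-product equals the trace of the product of the
sums of frontal slices. -/
theorem trace_tProd_eq_trace_sum_mul_sum (n1 n2 n3 : ℕ) [NeZero n3]
    (A : Fin n3 → Matrix (Fin n1) (Fin n2) ℂ)
    (B : Fin n3 → Matrix (Fin n2) (Fin n1) ℂ) :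
    ∑ t : Fin n3, (tProd A B t).trace =
      ((∑ i : Fin n3, A i) * (∑ i : Fin n3, B i)).trace := by
  rw [← trace_sum, sum_tProd]
end

section
/- For tensors A ∈ ℂ^{n1×n2×n3} and B ∈ ℂ^{n2×n1×n3}, tr(A * B) = tr(Ā^{(1)} B̄^{(1)}), where Ā^{(1)} and B̄^{(1)} are the first frontal slices of the DFTs of A and B along the third dimension. -/
open Finset Matrix

/-- The k-th frontal slice of the DFT of a tensor along the third dimension. -/
noncomputable def dftSlice {n1 n2 n3 : ℕ} (A : Fin n3 → Matrix (Fin n1) (Fin n2) ℂ)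
    (k : Fin n3) : Matrix (Fin n1) (Fin n2) ℂ :=
  ∑ t : Fin n3,
    (Complex.exp (-(2 * Real.pi * Complex.I) / n3) ^ ((t : ℕ) * (k : ℕ))) • A t

/-! The zeroth DFT slice is just the sum of the frontal slices, and the slices of the t-product
are the circular convolution `∑ s, A (t - s) * B s`. Summing a circular convolution over `t`
decouples it into `(∑ A) * (∑ B)`; taking traces finishes. -/

theorem dftSlice_zero {n1 n2 n3 : ℕ} [NeZero n3] (A : Fin n3 → Matrix (Fin n1) (Fin n2) ℂ) :
    dftSlice A 0 = ∑ t, A t := by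
  simp [dftSlice]

theorem sum_tProd_eq_sum_mul_sum {n1 n2 n3 n4 : ℕ} [NeZero n3]
    (A : Fin n3 → Matrix (Fin n1) (Fin n2) ℂ) (B : Fin n3 → Matrix (Fin n2) (Fin n4) ℂ) :
    ∑ t, tProd A B t = (∑ t, A t) * ∑ s, B s := by
  calc ∑ t, tProd A B t = ∑ s, ∑ t, A (t - s) * B s := by
        simp_rw [tProd_apply]
        exact Finset.sum_comm
    _ = ∑ s, ∑ u, A u * B s :=
        Finset.sum_congr rfl fun s _ => Fintype.sum_equiv (Equiv.subRight s) _ _ fun _ => rfl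
    _ = (∑ u, A u) * ∑ s, B s := by simp_rw [Matrix.mul_sum, Matrix.sum_mul]

/-- trace of the t-product equals the trace of the product of the
first Fourier-domain frontal slices. -/
theorem trace_tProd_eq_trace_fourier_first_slices (n1 n2 n3 : ℕ) [NeZero n3]
    (A : Fin n3 → Matrix (Fin n1) (Fin n2) ℂ)
    (B : Fin n3 → Matrix (Fin n2) (Fin n1) ℂ) :
    ∑ t : Fin n3, (tProd A B t).trace =
      (dftSlice A 0 * dftSlice B 0).trace := by
  rw [← trace_sum, sum_tProd_eq_sum_mul_sum, dftSlice_zero, dftSlice_zero]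
end

section
/- The conjugate transpose reverses the t-product: (A * B)^T = B^T * A^T, where the tensor conjugate transpose of A ∈ ℂ^{n1×n2×n3} is defined by (A^T)^{(1)} = (A^{(1)})^H and (A^T)^{(i)} = (A^{(n3+2-i)})^H for i = 2,…,n3. -/
open Finset Matrix

/-- Tensor conjugate transpose: conjugate-transpose each frontal slice and
reverse the order of slices 2,…,n3 (slice k ↦ slice (-k) mod n3). -/
noncomputable def tTrans {n1 n2 n3 : ℕ} [NeZero n3]
    (A : Fin n3 → Matrix (Fin n1) (Fin n2) ℂ) :
    Fin n3 → Matrix (Fin n2) (Fin n1) ℂ :=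
  fun k => (A (-k))ᴴ

theorem tProd_eq_sum {n1 n2 n3 n4 : ℕ} [NeZero n3]
    (A : Fin n3 → Matrix (Fin n1) (Fin n2) ℂ) (B : Fin n3 → Matrix (Fin n2) (Fin n4) ℂ)
    (t : Fin n3) : tProd A B t = ∑ q, A (t - q) * B q := by
  ext i j
  simp only [tProd, bcirc, unfold, mul_apply, Fintype.sum_prod_type, Matrix.sum_apply]

theorem tTrans_apply {n1 n2 n3 : ℕ} [NeZero n3] (A : Fin n3 → Matrix (Fin n1) (Fin n2) ℂ)
    (k : Fin n3) : tTrans A k = (A (-k))ᴴ :=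
  rfl

/-- the conjugate transpose reverses the t-product. -/
theorem tTrans_tProd (n1 n2 n3 n4 : ℕ) [NeZero n3]
    (A : Fin n3 → Matrix (Fin n1) (Fin n2) ℂ)
    (B : Fin n3 → Matrix (Fin n2) (Fin n4) ℂ) :
    tTrans (tProd A B) = tProd (tTrans B) (tTrans A) := by
  funext k
  rw [tTrans_apply, tProd_eq_sum, tProd_eq_sum, conjTranspose_sum]
  -- substitute `q ↦ k + q`, which turns `-k - q` into `-(k + q)` and `-(k - (k + q))` into `-q`
  refine Fintype.sum_equiv (Equiv.addLeft k) _ _ fun q => ?_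
  rw [conjTranspose_mul, Equiv.coe_addLeft, tTrans_apply, tTrans_apply, sub_add_cancel_left,
    neg_neg, neg_add']
end

section
/- The conjugate transpose of a tensor commutes with the Fourier transform in the sense that the k-th frontal slice of the DFT of A^T equals the conjugate transpose of the k-th frontal slice of the DFT of A: (A^T)‾^{(k)} = (Ā^{(k)})^H. -/
open Finset Matrix

/-! The DFT root `ω = exp (-2πi / n3)` is an `n3`-th root of unity, hence of modulus one, so
`conj (ω ^ (t * k)) = ω ^ ((-t mod n3) * k)`. Reindexing the DFT sum of `tTrans A` by `t ↦ -t`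
therefore turns it, term by term, into the conjugate transpose of the DFT sum of `A`. -/

theorem pow_val_neg_eq_inv {M : Type*} [DivisionMonoid M] {n : ℕ} [NeZero n] {ζ : M}
    (hζ : ζ ^ n = 1) (t : Fin n) : ζ ^ ((-t : Fin n) : ℕ) = (ζ ^ (t : ℕ))⁻¹ := by
  refine eq_inv_of_mul_eq_one_left ?_
  rw [← pow_add, pow_eq_pow_mod _ hζ, ← Fin.val_add, neg_add_cancel, Fin.val_zero, pow_zero]

theorem Complex.star_eq_inv_of_pow_eq_one {n : ℕ} (hn : n ≠ 0) {ζ : ℂ} (hζ : ζ ^ n = 1) :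
    star ζ = ζ⁻¹ :=
  (inv_eq_conj (norm_eq_one_of_pow_eq_one hζ hn)).symm

theorem Complex.star_pow_val_mul_eq_pow_val_neg_mul {n : ℕ} [NeZero n] {ζ : ℂ}
    (hζ : ζ ^ n = 1) (t : Fin n) (k : ℕ) :
    star (ζ ^ ((t : ℕ) * k)) = ζ ^ (((-t : Fin n) : ℕ) * k) := by
  rw [star_pow, star_eq_inv_of_pow_eq_one (NeZero.ne n) hζ, pow_mul, pow_mul,
    pow_val_neg_eq_inv hζ, inv_pow]

theorem Complex.exp_neg_two_pi_I_div_pow_eq_one (n : ℕ) [NeZero n] :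
    Complex.exp (-(2 * Real.pi * Complex.I) / n) ^ n = 1 := by
  rw [neg_div, Complex.exp_neg]
  exact (Complex.isPrimitiveRoot_exp n (NeZero.ne n)).inv.pow_eq_one

/-- the DFT slice of the conjugate transpose is the conjugate
transpose of the DFT slice. -/
theorem dftSlice_tTrans (n1 n2 n3 : ℕ) [NeZero n3]
    (A : Fin n3 → Matrix (Fin n1) (Fin n2) ℂ) (k : Fin n3) :
    dftSlice (tTrans A) k = (dftSlice A k)ᴴ := by
  simp only [dftSlice, tTrans, conjTranspose_sum, conjTranspose_smul]
  refine (Fintype.sum_equiv (Equiv.neg (Fin n3)) _ _ fun t => ?_).symm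
  rw [Equiv.neg_apply, neg_neg,
    Complex.star_pow_val_mul_eq_pow_val_neg_mul (Complex.exp_neg_two_pi_I_div_pow_eq_one n3)]
end

section
/- For a matrix X ∈ ℝ^{m×n} with singular values σ_1 ≥ σ_2 ≥ … ≥ σ_{min(m,n)}, the truncated nuclear norm satisfies ‖X‖_r := Σ_{j=r+1}^{min(m,n)} σ_j(X) = ‖X‖_* − max{ tr(A X B^T) : A ∈ ℝ^{r×m}, A A^T = I_r, B ∈ ℝ^{r×n}, B B^T = I_r }. -/
/-!
Write `X = U D Vᵀ`. For `A`, `B` with orthonormal rows, `P = A U` and `Q = B V` again have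
orthonormal rows, and `tr (A X Bᵀ) = ∑ⱼ σⱼ ⟪Qⱼ, Pⱼ⟫` over their `j`-th columns. By AM–GM this is at
most the average of `∑ⱼ σⱼ ‖Pⱼ‖²` and `∑ⱼ σⱼ ‖Qⱼ‖²`. The squared column norms of a matrix with `r`
orthonormal rows lie in `[0, 1]` and sum to `r`, so a bathtub argument with threshold `σᵣ₊₁` bounds
each of these sums by `σ₁ + ⋯ + σᵣ`. The first `r` columns of `U` and `V` attain the bound.
-/

open Matrix Finset

noncomputable def svdDiag (m n : ℕ) (σ : Fin (min m n) → ℝ) :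
    Matrix (Fin m) (Fin n) ℝ :=
  Matrix.of fun i j =>
    if h : (i : ℕ) = (j : ℕ) ∧ (i : ℕ) < min m n then σ ⟨i, h.2⟩ else 0

theorem sum_mul_le_sum_of_threshold {ι : Type*} [Fintype ι] (S : Finset ι) {σ w : ι → ℝ}
    {θ : ℝ} (hθ : 0 ≤ θ) (hσS : ∀ j ∈ S, θ ≤ σ j) (hσSc : ∀ j ∉ S, σ j ≤ θ)
    (hw0 : ∀ j, 0 ≤ w j) (hw1 : ∀ j, w j ≤ 1) (hw : ∑ j, w j ≤ #S) :
    ∑ j, σ j * w j ≤ ∑ j ∈ S, σ j := by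
  classical
  have hterm : ∑ j, (σ j - θ) * (w j - if j ∈ S then 1 else 0) ≤ 0 := by
    refine sum_nonpos fun j _ => ?_
    split_ifs with hj
    · exact mul_nonpos_of_nonneg_of_nonpos (sub_nonneg.2 (hσS j hj)) (by linarith [hw1 j])
    · exact mul_nonpos_of_nonpos_of_nonneg (sub_nonpos.2 (hσSc j hj)) (by linarith [hw0 j])
  have hexpand : ∑ j, (σ j - θ) * (w j - if j ∈ S then 1 else 0)
      = ∑ j, σ j * w j - ∑ j ∈ S, σ j - θ * (∑ j, w j - #S) := by
    simp only [sub_mul, mul_sub, mul_ite, mul_one, mul_zero, sum_sub_distrib, sum_ite_mem,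
      univ_inter, ← mul_sum, sum_const, nsmul_eq_mul]
    ring
  nlinarith [mul_nonneg hθ (sub_nonneg.2 hw)]

theorem Fin.sum_castLE_eq_sum_filter {M : Type*} [AddCommMonoid M] {r N : ℕ} (h : r ≤ N)
    (f : Fin N → M) :
    ∑ i : Fin r, f (Fin.castLE h i) = ∑ j ∈ univ.filter (fun j : Fin N => (j : ℕ) < r), f j := by
  refine (sum_map univ (Fin.castLEEmb h) f).symm.trans (congrArg (Finset.sum · f) ?_)
  ext j
  simp only [mem_map, mem_univ, true_and, mem_filter, Fin.castLEEmb_apply]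
  exact ⟨fun ⟨i, hi⟩ => hi ▸ i.isLt, fun hj => ⟨⟨j, hj⟩, rfl⟩⟩

theorem sum_mul_le_sum_castLE_of_antitone {N r : ℕ} (hr : r ≤ N) {σ w : Fin N → ℝ}
    (hσ : Antitone σ) (hσ0 : ∀ j, 0 ≤ σ j) (hw0 : ∀ j, 0 ≤ w j) (hw1 : ∀ j, w j ≤ 1)
    (hw : ∑ j, w j ≤ r) :
    ∑ j, σ j * w j ≤ ∑ i : Fin r, σ (Fin.castLE hr i) := by
  rw [Fin.sum_castLE_eq_sum_filter]
  refine sum_mul_le_sum_of_threshold _ (θ := if h : r < N then σ ⟨r, h⟩ else 0) ?_ ?_ ?_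
    hw0 hw1 ?_
  · split_ifs
    exacts [hσ0 _, le_rfl]
  · intro j hj
    rw [mem_filter] at hj
    split_ifs
    · exact hσ (Fin.mk_le_mk.2 hj.2.le)
    · exact hσ0 j
  · intro j hj
    have hrj : r ≤ j := by simpa using hj
    rw [dif_pos (hrj.trans_lt j.isLt)]
    exact hσ (Fin.mk_le_mk.2 hrj)
  · rwa [Fin.card_filter_val_lt, min_eq_right hr]

section Gram

variable {ι κ ν : Type*} [Fintype ι]

theorem transpose_mul_self_apply_self_nonneg (P : Matrix ι κ ℝ) (k : κ) : 0 ≤ (Pᵀ * P) k k :=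
  sum_nonneg fun i _ => mul_self_nonneg (P i k)

theorem transpose_mul_self_apply_self_le_one [Fintype κ] [DecidableEq ι] {P : Matrix ι κ ℝ}
    (hP : P * Pᵀ = 1) (k : κ) : (Pᵀ * P) k k ≤ 1 := by
  set G := Pᵀ * P
  have hidem : G * G = G := by
    simp only [G, Matrix.mul_assoc, ← Matrix.mul_assoc P, hP, Matrix.one_mul]
  have hsymm : ∀ a b, G a b = G b a := fun a b => sum_congr rfl fun i _ => mul_comm _ _
  have hsq : G k k = ∑ c, G k c ^ 2 :=
    calc G k k = ∑ c, G k c * G c k := by rw [← mul_apply, hidem]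
      _ = ∑ c, G k c ^ 2 := sum_congr rfl fun c _ => by rw [hsymm c k, sq]
  have hle : G k k ^ 2 ≤ G k k :=
    hsq ▸ single_le_sum (f := fun c => G k c ^ 2) (fun c _ => sq_nonneg _) (mem_univ k)
  nlinarith

theorem trace_transpose_mul_self [Fintype κ] [DecidableEq ι] {P : Matrix ι κ ℝ}
    (hP : P * Pᵀ = 1) : (Pᵀ * P).trace = Fintype.card ι := by
  rw [trace_mul_comm, hP, trace_one]

theorem two_mul_transpose_mul_apply_le [Fintype κ] [Fintype ν] (P : Matrix ι κ ℝ)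
    (Q : Matrix ι ν ℝ) (k : κ) (l : ν) :
    2 * (Pᵀ * Q) k l ≤ (Pᵀ * P) k k + (Qᵀ * Q) l l := by
  have h : 0 ≤ ∑ i, (P i k - Q i l) ^ 2 := sum_nonneg fun i _ => sq_nonneg _
  simp only [sub_sq, sum_add_distrib, sum_sub_distrib, mul_assoc, ← mul_sum] at h
  simp only [mul_apply, transpose_apply, ← sq]
  linarith

end Gram

section svdDiag

variable {m n : ℕ} (σ : Fin (min m n) → ℝ)

theorem svdDiag_eq_sum_single :
    svdDiag m n σ
      = ∑ j, single (Fin.castLE (min_le_left m n) j) (Fin.castLE (min_le_right m n) j) (σ j) := by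
  ext k l
  simp only [Matrix.sum_apply, single_apply, svdDiag, of_apply]
  by_cases h : (k : ℕ) = l ∧ (k : ℕ) < min m n
  · rw [dif_pos h, sum_eq_single_of_mem ⟨k, h.2⟩ (mem_univ _)]
    · exact (if_pos ⟨rfl, Fin.ext h.1⟩).symm
    · rintro c - hc
      exact if_neg fun hck => hc (Fin.ext (by simpa using congrArg Fin.val hck.1))
  · rw [dif_neg h]
    refine (sum_eq_zero fun c _ => if_neg ?_).symm
    rintro ⟨rfl, rfl⟩
    exact h ⟨rfl, c.isLt⟩

theorem trace_svdDiag_mul (M : Matrix (Fin n) (Fin m) ℝ) :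
    (svdDiag m n σ * M).trace
      = ∑ j, σ j * M (Fin.castLE (min_le_right m n) j) (Fin.castLE (min_le_left m n) j) := by
  simp only [svdDiag_eq_sum_single, Matrix.sum_mul, trace_sum, trace_single_mul, smul_eq_mul]

theorem trace_submatrix_svdDiag {r : ℕ} (hr : r ≤ min m n) :
    ((svdDiag m n σ).submatrix (Fin.castLE (hr.trans (min_le_left m n)))
      (Fin.castLE (hr.trans (min_le_right m n)))).trace = ∑ i : Fin r, σ (Fin.castLE hr i) := by
  simp only [trace, diag_apply, submatrix_apply, svdDiag, of_apply, Fin.val_castLE, true_and]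
  exact sum_congr rfl fun i _ => dif_pos (i.isLt.trans_le hr)

end svdDiag

theorem sum_mul_transpose_mul_self_castLE_le {N k r : ℕ} (hr : r ≤ N) (hN : N ≤ k)
    {σ : Fin N → ℝ} (hσ : Antitone σ) (hσ0 : ∀ j, 0 ≤ σ j) {P : Matrix (Fin r) (Fin k) ℝ}
    (hP : P * Pᵀ = 1) :
    ∑ j, σ j * (Pᵀ * P) (Fin.castLE hN j) (Fin.castLE hN j)
      ≤ ∑ i : Fin r, σ (Fin.castLE hr i) := by
  refine sum_mul_le_sum_castLE_of_antitone hr hσ hσ0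
    (fun j => transpose_mul_self_apply_self_nonneg P _)
    (fun j => transpose_mul_self_apply_self_le_one hP _) ?_
  calc ∑ j, (Pᵀ * P) (Fin.castLE hN j) (Fin.castLE hN j)
      = ∑ j ∈ univ.map (Fin.castLEEmb hN), (Pᵀ * P) j j :=
        (sum_map univ (Fin.castLEEmb hN) fun j => (Pᵀ * P) j j).symm
    _ ≤ (Pᵀ * P).trace := sum_le_univ_sum_of_nonneg (transpose_mul_self_apply_self_nonneg P)
    _ = r := by rw [trace_transpose_mul_self hP, Fintype.card_fin]

theorem trace_mul_svdDiag_mul_transpose_le {m n r : ℕ} (hr : r ≤ min m n)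
    {σ : Fin (min m n) → ℝ} (hσ : Antitone σ) (hσ0 : ∀ j, 0 ≤ σ j)
    {P : Matrix (Fin r) (Fin m) ℝ} {Q : Matrix (Fin r) (Fin n) ℝ}
    (hP : P * Pᵀ = 1) (hQ : Q * Qᵀ = 1) :
    (P * svdDiag m n σ * Qᵀ).trace ≤ ∑ i : Fin r, σ (Fin.castLE hr i) := by
  set cm := Fin.castLE (min_le_left m n)
  set cn := Fin.castLE (min_le_right m n)
  have hPbound := sum_mul_transpose_mul_self_castLE_le hr (min_le_left m n) hσ hσ0 hP
  have hQbound := sum_mul_transpose_mul_self_castLE_le hr (min_le_right m n) hσ hσ0 hQ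
  calc (P * svdDiag m n σ * Qᵀ).trace = (svdDiag m n σ * (Qᵀ * P)).trace := by
        rw [trace_mul_comm, ← Matrix.mul_assoc, trace_mul_comm]
    _ = ∑ j, σ j * (Qᵀ * P) (cn j) (cm j) := trace_svdDiag_mul σ _
    _ ≤ ∑ j, σ j * (((Qᵀ * Q) (cn j) (cn j) + (Pᵀ * P) (cm j) (cm j)) / 2) := by
        gcongr with j
        · exact hσ0 j
        · linarith [two_mul_transpose_mul_apply_le Q P (cn j) (cm j)]
    _ = ((∑ j, σ j * (Qᵀ * Q) (cn j) (cn j)) + ∑ j, σ j * (Pᵀ * P) (cm j) (cm j)) / 2 := by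
        simp only [mul_add, add_div, sum_add_distrib, sum_div, mul_div_assoc]
    _ ≤ ∑ i : Fin r, σ (Fin.castLE hr i) := by linarith

theorem submatrix_id_mul_mul_transpose_submatrix_id {α l m n o p q : Type*} [Fintype n]
    [Fintype p] [NonUnitalNonAssocSemiring α] (L : Matrix m n α) (M : Matrix n p α)
    (R : Matrix q p α) (e : l → m) (f : o → q) :
    L.submatrix e id * M * (R.submatrix f id)ᵀ = (L * M * Rᵀ).submatrix e f := by
  rw [transpose_submatrix, ← submatrix_id_id M, ← submatrix_mul _ _ _ _ _ Function.bijective_id,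
    ← submatrix_mul _ _ _ _ _ Function.bijective_id, submatrix_id_id]

theorem submatrix_id_mul_transpose_eq_one {α l m n : Type*} [Fintype n] [NonAssocSemiring α]
    [DecidableEq l] [DecidableEq m] {A : Matrix m n α} (hA : A * Aᵀ = 1) {e : l → m}
    (he : Function.Injective e) : A.submatrix e id * (A.submatrix e id)ᵀ = 1 := by
  rw [transpose_submatrix, ← submatrix_mul _ _ _ _ _ Function.bijective_id, hA, submatrix_one e he]

theorem sum_sub_sum_filter_le_eq_sum_castLE {N r : ℕ} (hr : r ≤ N) (σ : Fin N → ℝ) :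
    (∑ j, σ j) - ∑ j ∈ univ.filter (fun j : Fin N => r ≤ (j : ℕ)), σ j
      = ∑ i : Fin r, σ (Fin.castLE hr i) := by
  rw [← sum_filter_add_sum_filter_not univ (fun j : Fin N => r ≤ (j : ℕ)), add_sub_cancel_left,
    Fin.sum_castLE_eq_sum_filter]
  simp only [not_le]

theorem truncated_nuclear_norm_eq_general (m n r : ℕ) (hr : r ≤ min m n)
    (X : Matrix (Fin m) (Fin n) ℝ)
    (U : Matrix (Fin m) (Fin m) ℝ) (V : Matrix (Fin n) (Fin n) ℝ)
    (σ : Fin (min m n) → ℝ) (hσ : Antitone σ) (hσ0 : ∀ j, 0 ≤ σ j)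
    (hU : U * Uᵀ = 1)
    (hV : V * Vᵀ = 1)
    (hX : X = U * svdDiag m n σ * Vᵀ) :
    IsGreatest
      {y : ℝ | ∃ (A : Matrix (Fin r) (Fin m) ℝ) (B : Matrix (Fin r) (Fin n) ℝ),
        A * Aᵀ = 1 ∧ B * Bᵀ = 1 ∧ y = (A * X * Bᵀ).trace}
      ((∑ j : Fin (min m n), σ j) -
        ∑ j ∈ univ.filter (fun j : Fin (min m n) => r ≤ (j : ℕ)), σ j) := by
  rw [sum_sub_sum_filter_le_eq_sum_castLE hr]
  subst hX
  refine ⟨?_, ?_⟩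
  · have hU' : Uᵀ * U = 1 := mul_eq_one_comm.1 hU
    have hV' : Vᵀ * V = 1 := mul_eq_one_comm.1 hV
    refine ⟨Uᵀ.submatrix (Fin.castLE (hr.trans (min_le_left m n))) id,
      Vᵀ.submatrix (Fin.castLE (hr.trans (min_le_right m n))) id,
      submatrix_id_mul_transpose_eq_one (by rwa [transpose_transpose]) (Fin.castLE_injective _),
      submatrix_id_mul_transpose_eq_one (by rwa [transpose_transpose]) (Fin.castLE_injective _), ?_⟩
    · have hcore : Uᵀ * (U * svdDiag m n σ * Vᵀ) * V = svdDiag m n σ := by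
        rw [← Matrix.mul_assoc, ← Matrix.mul_assoc, hU', Matrix.one_mul, Matrix.mul_assoc, hV',
          Matrix.mul_one]
      rw [submatrix_id_mul_mul_transpose_submatrix_id, transpose_transpose, hcore,
        trace_submatrix_svdDiag]
  · rintro _ ⟨A, B, hA, hB, rfl⟩
    have hAU : (A * U) * (A * U)ᵀ = 1 := by
      rw [transpose_mul, Matrix.mul_assoc, ← Matrix.mul_assoc U, hU, Matrix.one_mul, hA]
    have hBV : (B * V) * (B * V)ᵀ = 1 := by
      rw [transpose_mul, Matrix.mul_assoc, ← Matrix.mul_assoc V, hV, Matrix.one_mul, hB]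
    simpa only [transpose_mul, Matrix.mul_assoc] using
      trace_mul_svdDiag_mul_transpose_le hr hσ hσ0 hAU hBV

/-- the truncated nuclear norm Σ_{j>r} σ_j equals the nuclear
norm minus the maximum of tr(A X Bᵀ) over row-orthonormal A and B, the maximum
being attained. -/
theorem truncated_nuclear_norm_eq (m n r : ℕ) (hr : r ≤ min m n)
    (X : Matrix (Fin m) (Fin n) ℝ)
    (U : Matrix (Fin m) (Fin m) ℝ) (V : Matrix (Fin n) (Fin n) ℝ)
    (σ : Fin (min m n) → ℝ) (hσ : Antitone σ) (hσ0 : ∀ j, 0 ≤ σ j)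
    (hU : U * Uᵀ = 1) (hU' : Uᵀ * U = 1)
    (hV : V * Vᵀ = 1) (hV' : Vᵀ * V = 1)
    (hX : X = U * svdDiag m n σ * Vᵀ) :
    IsGreatest
      {y : ℝ | ∃ (A : Matrix (Fin r) (Fin m) ℝ) (B : Matrix (Fin r) (Fin n) ℝ),
        A * Aᵀ = 1 ∧ B * Bᵀ = 1 ∧ y = (A * X * Bᵀ).trace}
      ((∑ j : Fin (min m n), σ j) -
        ∑ j ∈ univ.filter (fun j : Fin (min m n) => r ≤ (j : ℕ)), σ j) :=
  truncated_nuclear_norm_eq_general m n r hr X U V σ hσ hσ0 hU hV hX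
end
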